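/- A condensation of a guarded clause is a guarded clause, and a condensation of a loosely guarded clause is a loosely guarded clause. -/

import Mathlib

/-!
Common formalization of first-order clausal logic (without equality), following
"Resolution-based query answering and rewriting for the (loosely) guarded fragment".
-/

set_option linter.unusedVariables false

namespace QGF

/-- Symbols: function symbols, constant symbols and predicate symbols, each indexed by ℕ. -/
inductive Head : Type
  | fn : ℕ → Head
  | cn : ℕ → Head
  | pr : ℕ → Head
  deriving DecidableEq

/-- First-order terms.  A constant `c` is represented as `Term.app (Head.cn c) []`. -/
inductive Term : Type
  | var : ℕ → Term
  | app : Head → List Term → Term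

namespace Term

def isVar : Term → Prop
  | var _ => True
  | _ => False

def isConst : Term → Prop
  | app (.cn _) [] => True
  | _ => False

/-- A compound term is a term that is neither a variable nor a constant. -/
def isCompound (t : Term) : Prop := ¬ t.isVar ∧ ¬ t.isConst

/-- Occurrence of a variable in a term. -/
inductive HasVar : Term → ℕ → Prop
  | var (x : ℕ) : HasVar (var x) x
  | app {h : Head} {ts : List Term} {x : ℕ} {t : Term} :
      t ∈ ts → HasVar t x → HasVar (app h ts) x

def vars (t : Term) : Set ℕ := {x | t.HasVar x}

/-- Subterm relation. -/
inductive SubtermOf : Term → Term → Prop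
  | refl (t : Term) : SubtermOf t t
  | app {s : Term} {h : Head} {ts : List Term} {t : Term} :
      t ∈ ts → SubtermOf s t → SubtermOf s (app h ts)

/-- Depth of a term: variables and constants have depth 0. -/
def depth : Term → ℕ
  | var _ => 0
  | app _ ts => (ts.attach.map fun t => depth t.1 + 1).foldr max 0
  decreasing_by
    have := List.sizeOf_lt_of_mem t.2
    simp only [Term.app.sizeOf_spec]
    omega

/-- Applying a substitution to a term. -/
def subst (σ : ℕ → Term) : Term → Term
  | var x => σ x
  | app h ts => app h (ts.attach.map fun t => subst σ t.1)
  decreasing_by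
    have := List.sizeOf_lt_of_mem t.2
    simp only [Term.app.sizeOf_spec]
    omega

def isGround (t : Term) : Prop := t.vars = ∅

/-- An argument is flat if it is a variable or a constant. -/
def flatArg (t : Term) : Prop := t.isVar ∨ t.isConst

/-- An argument is simple if it is a variable, a constant, or a compound term all of
whose arguments are variables or constants. -/
def simpleArg : Term → Prop
  | var _ => True
  | app _ ts => ∀ u ∈ ts, flatArg u

end Term

/-- Substitutions. -/
abbrev Subst := ℕ → Term

/-- Atoms. -/
structure Atom where
  pred : ℕ
  args : List Term

namespace Atom

def subst (σ : Subst) (a : Atom) : Atom := ⟨a.pred, a.args.map (Term.subst σ)⟩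

def vars (a : Atom) : Set ℕ := {x | ∃ t ∈ a.args, x ∈ t.vars}

def flat (a : Atom) : Prop := ∀ t ∈ a.args, t.flatArg

def simple (a : Atom) : Prop := ∀ t ∈ a.args, t.simpleArg

def ground (a : Atom) : Prop := a.vars = ∅

/-- An atom `P(t₁,…,tₙ)` viewed as the term with head the predicate symbol `P`. -/
def toTerm (a : Atom) : Term := .app (.pr a.pred) a.args

end Atom

/-- Literals. -/
structure Lit where
  pos : Bool
  atom : Atom

def Lit.mkPos (a : Atom) : Lit := ⟨true, a⟩
def Lit.mkNeg (a : Atom) : Lit := ⟨false, a⟩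

namespace Lit

def subst (σ : Subst) (L : Lit) : Lit := ⟨L.pos, L.atom.subst σ⟩

def vars (L : Lit) : Set ℕ := L.atom.vars

def ground (L : Lit) : Prop := L.vars = ∅

def flat (L : Lit) : Prop := L.atom.flat

def simple (L : Lit) : Prop := L.atom.simple

/-- Occurrence of a term in a literal (as a subterm of an argument). -/
def hasTerm (L : Lit) (t : Term) : Prop := ∃ u ∈ L.atom.args, t.SubtermOf u

def hasCompound (L : Lit) : Prop := ∃ t, L.hasTerm t ∧ t.isCompound

/-- A literal is covering if every compound term occurring in it contains exactly the
variables of the literal. -/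
def covering (L : Lit) : Prop := ∀ t, L.hasTerm t → t.isCompound → t.vars = L.vars

end Lit

/-- A clause is a (multi)set of literals, represented as a list, read disjunctively,
with all variables implicitly universally quantified. -/
abbrev Clause := List Lit

namespace Clause

def subst (σ : Subst) (C : Clause) : Clause := C.map (Lit.subst σ)

def vars (C : Clause) : Set ℕ := {x | ∃ L ∈ C, x ∈ L.vars}

def ground (C : Clause) : Prop := vars C = ∅

def flat (C : Clause) : Prop := ∀ L ∈ C, L.flat

def simple (C : Clause) : Prop := ∀ L ∈ C, L.simple

def hasTerm (C : Clause) (t : Term) : Prop := ∃ L ∈ C, L.hasTerm t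

/-- A clause is covering if every compound term occurring in it contains exactly the
variables of the clause. -/
def covering (C : Clause) : Prop := ∀ t, hasTerm C t → t.isCompound → t.vars = vars C

def hasNegCompound (C : Clause) : Prop := ∃ L ∈ C, L.pos = false ∧ L.hasCompound

def hasCompound (C : Clause) : Prop := ∃ L ∈ C, L.hasCompound

/-- The predicate symbols occurring in a clause. -/
def preds (C : Clause) : Set ℕ := {p | ∃ L ∈ C, L.atom.pred = p}

/-- The depth of a clause: the maximal depth of a term occurring in it. -/
def depth (C : Clause) : ℕ :=
  (C.map fun L => (L.atom.args.map Term.depth).foldr max 0).foldr max 0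

end Clause

/-- `L` is a guard of `C`:  a negative flat literal of `C` containing all variables of `C`. -/
def Lit.isGuardOf (L : Lit) (C : Clause) : Prop :=
  L ∈ C ∧ L.pos = false ∧ L.flat ∧ L.vars = Clause.vars C

/-- Guarded clauses (Definition 3.3). -/
def Clause.guarded (C : Clause) : Prop :=
  Clause.simple C ∧ Clause.covering C ∧ (Clause.ground C ∨ ∃ L : Lit, L.isGuardOf C)

/-- `G` is a set of loose guards of `C`. -/
def Clause.looseGuardsOf (G : List Lit) (C : Clause) : Prop :=
  (∀ L ∈ G, L ∈ C ∧ L.pos = false ∧ L.flat) ∧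
  (∀ x ∈ Clause.vars C, ∃ L ∈ G, x ∈ L.vars) ∧
  (∀ x ∈ Clause.vars C, ∀ y ∈ Clause.vars C, x ≠ y → ∃ L ∈ G, x ∈ L.vars ∧ y ∈ L.vars)

/-- Loosely guarded clauses (Definition 3.3). -/
def Clause.looselyGuarded (C : Clause) : Prop :=
  Clause.simple C ∧ Clause.covering C ∧
    (Clause.ground C ∨ ∃ G : List Lit, Clause.looseGuardsOf G C)

/-- Query clauses: flat clauses containing only negative literals (Definition 3.2). -/
def Clause.query (C : Clause) : Prop := Clause.flat C ∧ ∀ L ∈ C, L.pos = false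

/-! ### Semantics -/

/-- First-order interpretations. -/
structure Interp : Type 1 where
  dom : Type
  nonempty : Nonempty dom
  fn : Head → List dom → dom
  pr : ℕ → List dom → Prop

def Term.eval (I : Interp) (ν : ℕ → I.dom) : Term → I.dom
  | .var x => ν x
  | .app h ts => I.fn h (ts.attach.map fun t => Term.eval I ν t.1)
  decreasing_by
    have := List.sizeOf_lt_of_mem t.2
    simp only [Term.app.sizeOf_spec]
    omega

def Atom.holds (I : Interp) (ν : ℕ → I.dom) (a : Atom) : Prop :=
  I.pr a.pred (a.args.map (Term.eval I ν))

def Lit.holds (I : Interp) (ν : ℕ → I.dom) (L : Lit) : Prop :=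
  if L.pos then L.atom.holds I ν else ¬ L.atom.holds I ν

/-- A clause holds under a valuation if one of its literals does. -/
def Clause.holdsUnder (I : Interp) (ν : ℕ → I.dom) (C : Clause) : Prop :=
  ∃ L ∈ C, L.holds I ν

/-- A clause is true in an interpretation if its universal closure holds. -/
def Clause.trueIn (I : Interp) (C : Clause) : Prop := ∀ ν, Clause.holdsUnder I ν C

def Interp.models (I : Interp) (N : Set Clause) : Prop := ∀ C ∈ N, Clause.trueIn I C

/-- Satisfiability of a set of clauses. -/
def satisfiable (N : Set Clause) : Prop := ∃ I : Interp, I.models N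

/-- Logical consequence:  every model of `N` is a model of `C`. -/
def entails (N : Set Clause) (C : Clause) : Prop :=
  ∀ I : Interp, I.models N → Clause.trueIn I C

/-- A tautology is a clause true in every interpretation. -/
def Tautology (C : Clause) : Prop := ∀ (I : Interp) (ν : ℕ → I.dom), Clause.holdsUnder I ν C

/-- Two clauses are variants if each is an instance of the other. -/
def Variant (C D : Clause) : Prop :=
  (∃ σ : Subst, Clause.subst σ C = D) ∧ (∃ ρ : Subst, Clause.subst ρ D = C)

/-! ### Unification -/

def Unifies (σ : Subst) (a b : Atom) : Prop := a.subst σ = b.subst σ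

/-- Most general unifiers. -/
def IsMGU (σ : Subst) (a b : Atom) : Prop :=
  Unifies σ a b ∧ ∀ θ : Subst, Unifies θ a b → ∃ ρ : Subst, ∀ x, (σ x).subst ρ = θ x

def Lit.unifies (σ : Subst) (L1 L2 : Lit) : Prop := L1.subst σ = L2.subst σ

def Lit.isMGU (σ : Subst) (L1 L2 : Lit) : Prop :=
  Lit.unifies σ L1 L2 ∧ ∀ θ : Subst, Lit.unifies θ L1 L2 → ∃ ρ : Subst, ∀ x, (σ x).subst ρ = θ x

def UnifiesAll (σ : Subst) (ps : List (Atom × Atom)) : Prop :=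
  ∀ p ∈ ps, Atom.subst σ p.1 = Atom.subst σ p.2

/-- Simultaneous most general unifiers. -/
def IsSimMGU (σ : Subst) (ps : List (Atom × Atom)) : Prop :=
  UnifiesAll σ ps ∧ ∀ θ : Subst, UnifiesAll θ ps → ∃ ρ : Subst, ∀ x, (σ x).subst ρ = θ x

/-! ### Condensation, separability -/

/-- `D` is a subclause of `C` (as multisets). -/
def SubClause (D C : Clause) : Prop := (↑D : Multiset Lit) ≤ (↑C : Multiset Lit)

/-- `D` is a condensation of `C`: a proper subclause of `C` which is an instance of `C`
(up to duplicate literals). -/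
def IsCondensation (D C : Clause) : Prop :=
  SubClause D C ∧ D.length < C.length ∧
    ∃ σ : Subst, ∀ L : Lit, L ∈ D ↔ L ∈ Clause.subst σ C

/-- A clause `C ∨ D` is separable into `C` and `D` if both are non-empty and neither
variable set is included in the other. -/
def Separable (C D : Clause) : Prop :=
  C ≠ [] ∧ D ≠ [] ∧ ¬ Clause.vars C ⊆ Clause.vars D ∧ ¬ Clause.vars D ⊆ Clause.vars C

/-- A clause is indecomposable if it cannot be partitioned into two non-empty
variable-disjoint subclauses. -/
def Clause.indecomposable (C : Clause) : Prop :=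
  ¬ ∃ D E : Clause, D ≠ [] ∧ E ≠ [] ∧
      (↑C : Multiset Lit) = (↑D : Multiset Lit) + (↑E : Multiset Lit) ∧
      Clause.vars D ∩ Clause.vars E = ∅

/-- The predicate symbols occurring in a clause set. -/
def SetPreds (N : Set Clause) : Set ℕ := {p | ∃ C ∈ N, p ∈ Clause.preds C}

/-! ### Orderings -/

namespace Head

def rank : Head → ℕ
  | .pr _ => 0
  | .cn _ => 1
  | .fn _ => 2

def idx : Head → ℕ
  | .pr n => n
  | .cn n => n
  | .fn n => n

/-- The precedence: every function symbol is greater than every constant, and every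
constant is greater than every predicate symbol. -/
def prec (g h : Head) : Prop := g.rank < h.rank ∨ (g.rank = h.rank ∧ g.idx < h.idx)

end Head

/-- The lexicographic path ordering on terms induced by the precedence `Head.prec`.
`LpoGT s t` means `s ≻_lpo t`. -/
inductive LpoGT : Term → Term → Prop
  | subRefl {h : Head} {ss : List Term} {t : Term} :
      t ∈ ss → LpoGT (.app h ss) t
  | sub {h : Head} {ss : List Term} {t : Term} (s : Term) :
      s ∈ ss → LpoGT s t → LpoGT (.app h ss) t
  | prec {h g : Head} {ss ts : List Term} :
      Head.prec g h → (∀ t ∈ ts, LpoGT (.app h ss) t) → LpoGT (.app h ss) (.app g ts)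
  | lex {h : Head} {ss ts u ss' ts' : List Term} {s t : Term} :
      ss = u ++ s :: ss' → ts = u ++ t :: ts' → LpoGT s t →
      (∀ t' ∈ ts, LpoGT (.app h ss) t') → LpoGT (.app h ss) (.app h ts)

/-- The induced lexicographic path ordering on literals, where a negative literal is
greater than the corresponding positive literal. -/
def Lit.lpoGT (L1 L2 : Lit) : Prop :=
  LpoGT L1.atom.toTerm L2.atom.toTerm ∨
    (L1.atom.toTerm = L2.atom.toTerm ∧ L1.pos = false ∧ L2.pos = true)

/-- Admissible orderings on literals; `ord L L'` means `L ≻ L'`. -/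
structure Admissible (ord : Lit → Lit → Prop) : Prop where
  trans : ∀ {a b c : Lit}, ord a b → ord b c → ord a c
  irrefl : ∀ a : Lit, ¬ ord a a
  totalGround : ∀ a b : Lit, a.ground → b.ground → a = b ∨ ord a b ∨ ord b a
  wfGround : WellFounded fun a b : Lit => a.ground ∧ b.ground ∧ ord b a
  liftable : ∀ (a b : Lit) (σ : Subst), ord a b → ord (a.subst σ) (b.subst σ)
  negGtPos : ∀ a : Atom, a.ground → ord (Lit.mkNeg a) (Lit.mkPos a)
  negCompat : ∀ a b : Atom, a.ground → b.ground →
    ord (Lit.mkPos b) (Lit.mkPos a) → ord (Lit.mkPos b) (Lit.mkNeg a)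

/-- The multiset extension of a literal ordering to clauses; `ClauseGT ord C D` means
`C ≻ D`. -/
def ClauseGT (ord : Lit → Lit → Prop) (C D : Clause) : Prop :=
  ∃ X Y Z : Multiset Lit,
    (↑C : Multiset Lit) = Z + X ∧ (↑D : Multiset Lit) = Z + Y ∧ X ≠ 0 ∧
      ∀ y ∈ Y, ∃ x ∈ X, ord x y

/-- `L` is maximal with respect to a clause `C` (`C` not necessarily containing `L`):
some ground instance of `L` is not smaller than the corresponding instances of the
literals of `C`. -/
def maxIn (ord : Lit → Lit → Prop) (L : Lit) (C : Clause) : Prop :=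
  ∃ σ : Subst, Lit.ground (L.subst σ) ∧ Clause.ground (Clause.subst σ C) ∧
    ∀ L' ∈ C, ¬ ord (Lit.subst σ L') (Lit.subst σ L)

/-- `L` is strictly maximal with respect to a clause `C`. -/
def strictMaxIn (ord : Lit → Lit → Prop) (L : Lit) (C : Clause) : Prop :=
  ∃ σ : Subst, Lit.ground (L.subst σ) ∧ Clause.ground (Clause.subst σ C) ∧
    ∀ L' ∈ C, ord (Lit.subst σ L) (Lit.subst σ L')

/-! ### Redundancy -/

def GroundInstanceOf (D C : Clause) : Prop := (∃ σ : Subst, D = Clause.subst σ C) ∧ Clause.ground D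

/-- Redundancy of a clause with respect to a clause set `N`:  every ground instance is
entailed by finitely many smaller ground instances of clauses of `N`. -/
def redundantClause (ord : Lit → Lit → Prop) (N : Set Clause) (C : Clause) : Prop :=
  ∀ D : Clause, GroundInstanceOf D C →
    ∃ S : Finset Clause, (∀ E ∈ S, ∃ C' ∈ N, GroundInstanceOf E C') ∧
      entails (↑S) D ∧ ∀ E ∈ S, ClauseGT ord D E

/-- An inference is redundant in `N` if a premise is redundant, or its conclusion is
redundant in `N` or belongs to `N`. -/
def RedundantInference (ord : Lit → Lit → Prop) (N : Set Clause)
    (premises : List Clause) (concl : Clause) : Prop :=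
  (∃ p ∈ premises, redundantClause ord N p) ∨ redundantClause ord N concl ∨ concl ∈ N

/-! ### Selection and eligibility -/

/-- Selection functions: select a set of negative literals of a clause. -/
def SelFn := Clause → Set Lit

def SelOK (sel : SelFn) : Prop := ∀ C : Clause, ∀ L ∈ sel C, L ∈ C ∧ L.pos = false

/-- A literal is eligible if it is selected, or nothing is selected and it is maximal. -/
def Eligible (ord : Lit → Lit → Prop) (sel : SelFn) (C : Clause) (L : Lit) : Prop :=
  (sel C = ∅ ∧ L ∈ C ∧ maxIn ord L C) ∨ L ∈ sel C

/-- Eligibility under the refinement T-Refine (Algorithm 1), in the cases not depending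
on side premises:  maximal literals for ground clauses and clauses with positive
compound terms, a selected negative compound-term literal, or a selected guard. -/
def EligibleTR (C : Clause) (L : Lit) : Prop :=
  L ∈ C ∧
    ((Clause.ground C ∧ maxIn Lit.lpoGT L C) ∨
     (¬ Clause.ground C ∧ Clause.hasNegCompound C ∧ L.pos = false ∧ L.hasCompound) ∨
     (¬ Clause.ground C ∧ ¬ Clause.hasNegCompound C ∧ Clause.hasCompound C ∧
        maxIn Lit.lpoGT L C) ∨
     (¬ Clause.ground C ∧ ¬ Clause.hasCompound C ∧ L.isGuardOf C))

/-! ### Top-variable resolution -/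

/-- `x` is a top variable of the negative atoms `A i` with respect to the candidate
unifier `σ'`:  the depth of `σ' x` is maximal. -/
def IsTopVar (n : ℕ) (A : Fin n → Atom) (σ' : Subst) (x : ℕ) : Prop :=
  (∃ i, x ∈ (A i).vars) ∧
    ∀ y : ℕ, (∃ i, y ∈ (A i).vars) → (σ' y).depth ≤ (σ' x).depth

/-- The data of an application of the top-variable resolution rule TRes:
main premise `¬A₁ ∨ … ∨ ¬Aₙ ∨ D`,  side premises `Bᵢ ∨ Dᵢ`,
`σ'` a simultaneous mgu of all `n` pairs used to compute top variables, and
`σ` a simultaneous mgu of the first `m` (top-variable) pairs. -/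
structure TResApp where
  n : ℕ
  m : ℕ
  A : Fin n → Atom
  B : Fin n → Atom
  Ds : Fin n → Clause
  D : Clause
  σ' : Subst
  σ : Subst

namespace TResApp

def mainPremise (t : TResApp) : Clause :=
  (List.ofFn fun i => Lit.mkNeg (t.A i)) ++ t.D

def sidePremise (t : TResApp) (i : Fin t.n) : Clause :=
  Lit.mkPos (t.B i) :: t.Ds i

def sidePremises (t : TResApp) : List Clause := List.ofFn t.sidePremise

def resolvent (t : TResApp) : Clause :=
  Clause.subst t.σ
    ((((List.finRange t.n).filter fun i => i.1 < t.m).flatMap t.Ds) ++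
     (((List.finRange t.n).filter fun i => t.m ≤ i.1).map fun i => Lit.mkNeg (t.A i)) ++
     t.D)

/-- Side conditions of the TRes rule. -/
def wf (ord : Lit → Lit → Prop) (t : TResApp) : Prop :=
  0 < t.m ∧ t.m ≤ t.n ∧
  (∀ L ∈ t.D, L.pos = true) ∧
  IsSimMGU t.σ' ((List.finRange t.n).map fun i => (t.A i, t.B i)) ∧
  IsSimMGU t.σ (((List.finRange t.n).filter fun i => i.1 < t.m).map fun i => (t.A i, t.B i)) ∧
  (∀ i : Fin t.n, i.1 < t.m ↔ ∃ x, IsTopVar t.n t.A t.σ' x ∧ x ∈ (t.A i).vars) ∧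
  (∀ i, strictMaxIn ord (Lit.mkPos (t.B i)) (t.Ds i)) ∧
  (∀ i, Clause.vars (t.sidePremise i) ∩ Clause.vars t.mainPremise = ∅) ∧
  (∀ i j, i ≠ j → Clause.vars (t.sidePremise i) ∩ Clause.vars (t.sidePremise j) = ∅)

end TResApp

/-! ### The generating inferences of T-Inf -/

/-- The conclusion-generating inferences of the top-variable inference system T-Inf:
ordered resolution with selection (Res), ordered factoring (Fact), and top-variable
resolution (TRes). `TInfInf ord sel ps c` means `c` is the conclusion of an inference
with premises `ps`. -/
inductive TInfInf (ord : Lit → Lit → Prop) (sel : SelFn) : List Clause → Clause → Prop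
  | res {B A : Atom} {D1 D : Clause} {σ : Subst} :
      IsMGU σ A B →
      sel (Lit.mkPos B :: D1) = ∅ →
      strictMaxIn ord (Lit.mkPos B) D1 →
      Eligible ord sel (Lit.mkNeg A :: D) (Lit.mkNeg A) →
      Clause.vars (Lit.mkPos B :: D1) ∩ Clause.vars (Lit.mkNeg A :: D) = ∅ →
      TInfInf ord sel [Lit.mkPos B :: D1, Lit.mkNeg A :: D] (Clause.subst σ (D1 ++ D))
  | fact {A1 A2 : Atom} {C : Clause} {σ : Subst} :
      IsMGU σ A1 A2 →
      sel (C ++ [Lit.mkPos A1, Lit.mkPos A2]) = ∅ →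
      maxIn ord (Lit.mkPos A1) (C ++ [Lit.mkPos A2]) →
      TInfInf ord sel [C ++ [Lit.mkPos A1, Lit.mkPos A2]] (Clause.subst σ (C ++ [Lit.mkPos A1]))
  | tres (t : TResApp) :
      t.wf ord →
      (∀ i, sel (t.sidePremise i) = ∅) →
      (∀ i : Fin t.n, i.1 < t.m → Lit.mkNeg (t.A i) ∈ sel t.mainPremise) →
      TInfInf ord sel (t.sidePremises ++ [t.mainPremise]) t.resolvent

/-- `N` is saturated up to redundancy with respect to the inference system `inf`:
every inference from non-redundant premises of `N` is redundant in `N`. -/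
def SaturatedUpToRedundancy (ord : Lit → Lit → Prop)
    (inf : List Clause → Clause → Prop) (N : Set Clause) : Prop :=
  ∀ (ps : List Clause) (c : Clause), inf ps c → (∀ p ∈ ps, p ∈ N) →
    RedundantInference ord N ps c


/-! ### Surface literals, chained and isolated variables of query clauses -/

/-- `L` is a surface literal of `Q`: no other literal of `Q` has a strictly larger
variable set. -/
def SurfaceLit (Q : Clause) (L : Lit) : Prop :=
  L ∈ Q ∧ ∀ L' ∈ Q, ¬ (L.vars ⊂ L'.vars)

/-- `x` is a chained variable of `Q`: it occurs in two distinct surface literals with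
different, mutually non-inclusive variable sets. -/
def ChainedVar (Q : Clause) (x : ℕ) : Prop :=
  ∃ L L' : Lit, SurfaceLit Q L ∧ SurfaceLit Q L' ∧ L ≠ L' ∧
    ¬ L.vars ⊆ L'.vars ∧ ¬ L'.vars ⊆ L.vars ∧ x ∈ L.vars ∧ x ∈ L'.vars

/-- `x` is an isolated variable of `Q`: a variable of `Q` that is not chained. -/
def IsolatedVar (Q : Clause) (x : ℕ) : Prop := x ∈ Clause.vars Q ∧ ¬ ChainedVar Q x

/-- A query clause is isolated-only if all its variables are isolated. -/
def Clause.isolatedOnly (Q : Clause) : Prop := ∀ x ∈ Clause.vars Q, ¬ ChainedVar Q x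

/-- A query clause is chained-only if all its variables are chained. -/
def Clause.chainedOnly (Q : Clause) : Prop := ∀ x ∈ Clause.vars Q, ChainedVar Q x

/-! ### The inferences of Q-AR -/

/-- The inferences of Q-AR: the T-Inf inferences together with the separation
inferences (Sep) and the T-Trans renaming inferences, both introducing fresh,
smaller definer predicate symbols. -/
inductive QARInf (ord : Lit → Lit → Prop) (sel : SelFn) : List Clause → Clause → Prop
  | tinf {ps : List Clause} {c : Clause} : TInfInf ord sel ps c → QARInf ord sel ps c
  | sepL {C D : Clause} {ds : ℕ} {xs : List ℕ} :
      Separable C D → {x | x ∈ xs} = Clause.vars C ∩ Clause.vars D →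
      ds ∉ Clause.preds (C ++ D) →
      QARInf ord sel [C ++ D] (Lit.mkNeg ⟨ds, xs.map Term.var⟩ :: C)
  | sepR {C D : Clause} {ds : ℕ} {xs : List ℕ} :
      Separable C D → {x | x ∈ xs} = Clause.vars C ∩ Clause.vars D →
      ds ∉ Clause.preds (C ++ D) →
      QARInf ord sel [C ++ D] (Lit.mkPos ⟨ds, xs.map Term.var⟩ :: D)
  | ttransDef {E F : Clause} {d : ℕ} {xs : List ℕ} :
      {x | x ∈ xs} = Clause.vars E → d ∉ Clause.preds (F ++ E) →
      QARInf ord sel [F ++ E] (Lit.mkPos ⟨d, xs.map Term.var⟩ :: E)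
  | ttransQ {E F : Clause} {d : ℕ} {xs : List ℕ} :
      {x | x ∈ xs} = Clause.vars E → d ∉ Clause.preds (F ++ E) →
      QARInf ord sel [F ++ E] (F ++ [Lit.mkNeg ⟨d, xs.map Term.var⟩])

/-! ### Q-AR as a transition system on clause sets -/

/-- A single derivation step of the procedure Q-AR on clause sets: adding a
Res/TRes/Fact conclusion, replacement by a condensation, deletion of tautologies and
variants, separation (Sep) and the renaming T-Trans (both with fresh definer
predicate symbols). -/
inductive QARStep : Set Clause → Set Clause → Prop
  | res {N : Set Clause} {A B : Atom} {D1 D : Clause} {σ : Subst} :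
      (Lit.mkPos B :: D1) ∈ N → (Lit.mkNeg A :: D) ∈ N → IsMGU σ A B →
      QARStep N (insert (Clause.subst σ (D1 ++ D)) N)
  | tres {N : Set Clause} (t : TResApp) :
      (∀ i, t.sidePremise i ∈ N) → t.mainPremise ∈ N →
      (∀ i : Fin t.n, i.1 < t.m → Atom.subst t.σ (t.A i) = Atom.subst t.σ (t.B i)) →
      QARStep N (insert t.resolvent N)
  | fact {N : Set Clause} {A1 A2 : Atom} {C : Clause} {σ : Subst} :
      (C ++ [Lit.mkPos A1, Lit.mkPos A2]) ∈ N → IsMGU σ A1 A2 →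
      QARStep N (insert (Clause.subst σ (C ++ [Lit.mkPos A1])) N)
  | conden {N : Set Clause} {C D : Clause} :
      C ∈ N → IsCondensation D C → QARStep N (insert D (N \ {C}))
  | deleteTaut {N : Set Clause} {C : Clause} :
      C ∈ N → Tautology C → QARStep N (N \ {C})
  | deleteVariant {N : Set Clause} {C C' : Clause} :
      C ∈ N → C' ∈ N → C ≠ C' → Variant C C' → QARStep N (N \ {C})
  | sep {N : Set Clause} {C D : Clause} {ds : ℕ} {xs : List ℕ} :
      (C ++ D) ∈ N → Separable C D → {x | x ∈ xs} = Clause.vars C ∩ Clause.vars D →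
      ds ∉ SetPreds N →
      QARStep N (insert (Lit.mkNeg ⟨ds, xs.map Term.var⟩ :: C)
        (insert (Lit.mkPos ⟨ds, xs.map Term.var⟩ :: D) (N \ {C ++ D})))
  | ttrans {N : Set Clause} {E F : Clause} {d : ℕ} {xs : List ℕ} :
      (F ++ E) ∈ N → {x | x ∈ xs} = Clause.vars E → d ∉ SetPreds N →
      QARStep N (insert (F ++ [Lit.mkNeg ⟨d, xs.map Term.var⟩])
        (insert (Lit.mkPos ⟨d, xs.map Term.var⟩ :: E) (N \ {F ++ E})))

/-!
If `σ` maps `C` into itself and some `σ x` with `x ∈ vars C` were compound, covering would put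
`x` inside `σ x`, and simplicity would make `x` an argument of `σ x`; then the compound term
`σ (σ x)`, which again occurs in `C`, would have the compound argument `σ x`, contradicting
simplicity. So a condensing substitution sends the variables of `C` to variables and constants,
and therefore sends flat guards to flat guards; their variable sets are carried along since the
variables of an instance are exactly those of the images of the variables of `C`.
-/

namespace Term

theorem subst_var (σ : Subst) (x : ℕ) : (var x).subst σ = σ x := by
  rw [subst]

theorem subst_app (σ : Subst) (h : Head) (ts : List Term) :
    (app h ts).subst σ = app h (ts.map (subst σ)) := by
  rw [subst]
  simp

theorem hasVar_subst (σ : Subst) : ∀ (u : Term) (x : ℕ),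
    (u.subst σ).HasVar x ↔ ∃ y, u.HasVar y ∧ (σ y).HasVar x
  | var z, x => by
      rw [subst_var]
      constructor
      · exact fun h => ⟨z, .var z, h⟩
      · rintro ⟨y, ⟨⟩, h⟩
        exact h
  | app h ts, x => by
      rw [subst_app]
      constructor
      · rintro (_ | ⟨hmem, hv⟩)
        obtain ⟨u, hu, rfl⟩ := List.mem_map.1 hmem
        obtain ⟨y, hy, hyx⟩ := (hasVar_subst σ u x).1 hv
        exact ⟨y, .app hu hy, hyx⟩
      · rintro ⟨y, (_ | ⟨hu, hy⟩), hyx⟩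
        exact .app (List.mem_map_of_mem hu) ((hasVar_subst σ _ x).2 ⟨y, hy, hyx⟩)
  termination_by u => sizeOf u
  decreasing_by
    all_goals
      have := List.sizeOf_lt_of_mem hu
      simp only [app.sizeOf_spec]
      omega

theorem SubtermOf.hasVar {t u : Term} {x : ℕ} (h : SubtermOf t u) (ht : t.HasVar x) :
    u.HasVar x := by
  induction h with
  | refl => exact ht
  | app hmem _ ih => exact .app hmem ih

theorem SubtermOf.subst (σ : Subst) {t u : Term} (h : SubtermOf t u) :
    SubtermOf (t.subst σ) (u.subst σ) := by
  induction h with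
  | refl => exact .refl _
  | app hmem _ ih =>
      rw [subst_app]
      exact .app (List.mem_map_of_mem hmem) ih

theorem subtermOf_of_hasVar {u : Term} {x : ℕ} (h : u.HasVar x) : SubtermOf (var x) u := by
  induction h with
  | var => exact .refl _
  | app hmem _ ih => exact .app hmem ih

theorem isCompound.not_flatArg {t : Term} (h : t.isCompound) : ¬ t.flatArg := by
  rintro (hv | hc)
  exacts [h.1 hv, h.2 hc]

theorem isCompound.subst (σ : Subst) {t : Term} (h : t.isCompound) : (t.subst σ).isCompound := by
  rcases t with x | ⟨hd, ts⟩
  · exact absurd trivial h.1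
  · rw [subst_app]
    refine ⟨id, fun hc => h.2 ?_⟩
    cases hd <;> cases ts <;> simp_all [isConst]

theorem flatArg.eq_of_subtermOf {t u : Term} (hu : u.flatArg) (h : SubtermOf t u) : t = u := by
  rcases h with _ | ⟨hmem, -⟩
  · rfl
  · rcases hu with hv | hc
    · exact absurd hv id
    · rename_i hd ts _
      cases hd <;> cases ts <;> simp_all [isConst]

theorem flatArg.eq_var_of_hasVar {v : Term} {x : ℕ} (hv : v.flatArg) (hx : v.HasVar x) :
    v = var x :=
  (hv.eq_of_subtermOf (subtermOf_of_hasVar hx)).symm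

theorem flatArg.subst {σ : Subst} {u : Term} (hu : u.flatArg) (hσ : ∀ z ∈ u.vars, (σ z).flatArg) :
    (u.subst σ).flatArg := by
  rcases u with z | ⟨hd, ts⟩
  · rw [subst_var]
    exact hσ z (.var z)
  · rcases hu with hv | hc
    · exact absurd hv id
    · cases hd <;> cases ts <;> simp_all [flatArg, isConst, subst_app]

theorem simpleArg.of_subtermOf {t u : Term} (hu : u.simpleArg) (h : SubtermOf t u)
    (ht : t.isCompound) : t.simpleArg := by
  rcases h with _ | ⟨hmem, hsub⟩
  · exact hu
  · have hflat := hu _ hmem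
    rw [hflat.eq_of_subtermOf hsub] at ht
    exact absurd hflat ht.not_flatArg

theorem simpleArg.var_mem {h : Head} {ts : List Term} {x : ℕ} (hs : (app h ts).simpleArg)
    (hx : (app h ts).HasVar x) : var x ∈ ts := by
  rcases hx with _ | ⟨hmem, hv⟩
  rwa [← (hs _ hmem).eq_var_of_hasVar hv]

end Term

theorem Lit.mem_vars_subst {σ : Subst} {L : Lit} {x : ℕ} :
    x ∈ (L.subst σ).vars ↔ ∃ y ∈ L.vars, (σ y).HasVar x := by
  constructor
  · rintro ⟨_, hu', hx⟩
    obtain ⟨u, hu, rfl⟩ := List.mem_map.1 hu'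
    obtain ⟨y, hy, hyx⟩ := (Term.hasVar_subst σ u x).1 hx
    exact ⟨y, ⟨u, hu, hy⟩, hyx⟩
  · rintro ⟨y, ⟨u, hu, hy⟩, hyx⟩
    exact ⟨u.subst σ, List.mem_map_of_mem hu, (Term.hasVar_subst σ u x).2 ⟨y, hy, hyx⟩⟩

theorem Lit.flat.subst {σ : Subst} {L : Lit} (hL : L.flat) (hσ : ∀ z ∈ L.vars, (σ z).flatArg) :
    (L.subst σ).flat := by
  intro t ht
  obtain ⟨u, hu, rfl⟩ := List.mem_map.1 ht
  exact (hL u hu).subst fun z hz => hσ z ⟨u, hu, hz⟩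

namespace Clause

theorem mem_subst {σ : Subst} {C : Clause} {L : Lit} :
    L ∈ C.subst σ ↔ ∃ M ∈ C, M.subst σ = L :=
  List.mem_map

theorem mem_vars_subst {σ : Subst} {C : Clause} {x : ℕ} :
    x ∈ vars (C.subst σ) ↔ ∃ y ∈ vars C, (σ y).HasVar x := by
  constructor
  · rintro ⟨_, hM', hx⟩
    obtain ⟨M, hM, rfl⟩ := mem_subst.1 hM'
    obtain ⟨y, hy, hyx⟩ := Lit.mem_vars_subst.1 hx
    exact ⟨y, ⟨M, hM, hy⟩, hyx⟩
  · rintro ⟨y, ⟨M, hM, hy⟩, hyx⟩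
    exact ⟨M.subst σ, List.mem_map_of_mem hM, Lit.mem_vars_subst.2 ⟨y, hy, hyx⟩⟩

theorem vars_mono {C D : Clause} (hDC : ∀ L ∈ D, L ∈ C) : vars D ⊆ vars C :=
  fun _ ⟨L, hL, hx⟩ => ⟨L, hDC L hL, hx⟩

theorem vars_congr {D E : Clause} (h : ∀ L, L ∈ D ↔ L ∈ E) : vars D = vars E :=
  (vars_mono fun L => (h L).1).antisymm (vars_mono fun L => (h L).2)

theorem hasTerm.mono {C D : Clause} {t : Term} (hDC : ∀ L ∈ D, L ∈ C) (ht : hasTerm D t) :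
    hasTerm C t :=
  let ⟨L, hL, hLt⟩ := ht
  ⟨L, hDC L hL, hLt⟩

theorem hasTerm.subst (σ : Subst) {C : Clause} {t : Term} (ht : hasTerm C t) :
    hasTerm (C.subst σ) (t.subst σ) :=
  let ⟨L, hL, u, hu, htu⟩ := ht
  ⟨L.subst σ, List.mem_map_of_mem hL, u.subst σ, List.mem_map_of_mem hu, htu.subst σ⟩

theorem hasTerm_var {C : Clause} {x : ℕ} (hx : x ∈ vars C) : hasTerm C (.var x) :=
  let ⟨L, hL, u, hu, hux⟩ := hx
  ⟨L, hL, u, hu, Term.subtermOf_of_hasVar hux⟩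

theorem simple.mono {C D : Clause} (hDC : ∀ L ∈ D, L ∈ C) (hC : simple C) : simple D :=
  fun L hL => hC L (hDC L hL)

theorem simple.simpleArg {C : Clause} {t : Term} (hC : simple C) (ht : hasTerm C t)
    (htc : t.isCompound) : t.simpleArg :=
  let ⟨L, hL, u, hu, htu⟩ := ht
  (hC L hL u hu).of_subtermOf htu htc

theorem covering.mono {C D : Clause} (hDC : ∀ L ∈ D, L ∈ C) (hC : covering C) : covering D := by
  intro t ht htc
  refine subset_antisymm ?_ ((hC t (ht.mono hDC) htc).symm ▸ vars_mono hDC)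
  obtain ⟨L, hL, u, hu, htu⟩ := ht
  exact fun x hx => ⟨L, hL, u, hu, htu.hasVar hx⟩

theorem ground.mono {C D : Clause} (hDC : ∀ L ∈ D, L ∈ C) (hC : ground C) : ground D :=
  Set.subset_empty_iff.1 (hC ▸ vars_mono hDC)

theorem flatArg_subst_of_subst_mem {C : Clause} {σ : Subst} (hsimp : simple C)
    (hcov : covering C) (hσ : ∀ L ∈ C, L.subst σ ∈ C) : ∀ x ∈ vars C, (σ x).flatArg := by
  intro x hx
  have hσC : ∀ L ∈ C.subst σ, L ∈ C := fun L hL => by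
    obtain ⟨M, hM, rfl⟩ := mem_subst.1 hL
    exact hσ M hM
  have hterm : ∀ t, hasTerm C t → hasTerm C (t.subst σ) := fun t ht => (ht.subst σ).mono hσC
  by_contra hflat
  have hcomp : (σ x).isCompound := ⟨fun h => hflat (.inl h), fun h => hflat (.inr h)⟩
  have ht : hasTerm C (σ x) := Term.subst_var σ x ▸ hterm _ (hasTerm_var hx)
  have hxt : x ∈ (σ x).vars := by rwa [hcov _ ht hcomp]
  obtain ⟨h, ts, hts⟩ : ∃ h ts, σ x = .app h ts := by
    rcases hσx : σ x with z | ⟨h, ts⟩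
    · exact absurd (hσx ▸ trivial) hcomp.1
    · exact ⟨h, ts, rfl⟩
  rw [hts] at ht hcomp hxt
  have hmem : Term.var x ∈ ts := (hsimp.simpleArg ht hcomp).var_mem hxt
  have hsimp' := hsimp.simpleArg (hterm _ ht) (hcomp.subst σ)
  rw [Term.subst_app] at hsimp'
  have := hsimp' _ (List.mem_map_of_mem hmem)
  rw [Term.subst_var, hts] at this
  exact hcomp.not_flatArg this

theorem looseGuardsOf.exists_mem_vars_pair {G : List Lit} {C : Clause} (hG : looseGuardsOf G C)
    {x y : ℕ} (hx : x ∈ vars C) (hy : y ∈ vars C) : ∃ L ∈ G, x ∈ L.vars ∧ y ∈ L.vars := by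
  by_cases hxy : x = y
  · obtain ⟨L, hL, hxL⟩ := hG.2.1 x hx
    exact ⟨L, hL, hxL, hxy ▸ hxL⟩
  · exact hG.2.2 x hx y hy hxy

theorem looseGuardsOf.subst {G : List Lit} {C D : Clause} {σ : Subst} (hG : looseGuardsOf G C)
    (hD : ∀ L, L ∈ D ↔ L ∈ C.subst σ) (hσ : ∀ z ∈ vars C, (σ z).flatArg) :
    looseGuardsOf (G.map (Lit.subst σ)) D := by
  rw [looseGuardsOf, vars_congr hD]
  refine ⟨?_, fun x hx => ?_, fun x hx y hy _ => ?_⟩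
  · intro L' hL'
    obtain ⟨L, hL, rfl⟩ := List.mem_map.1 hL'
    obtain ⟨hLC, hneg, hflat⟩ := hG.1 L hL
    exact ⟨(hD _).2 (List.mem_map_of_mem hLC), hneg,
      hflat.subst fun z hz => hσ z ⟨L, hLC, hz⟩⟩
  · obtain ⟨z, hz, hzx⟩ := mem_vars_subst.1 hx
    obtain ⟨L, hL, hzL⟩ := hG.2.1 z hz
    exact ⟨L.subst σ, List.mem_map_of_mem hL, Lit.mem_vars_subst.2 ⟨z, hzL, hzx⟩⟩
  · obtain ⟨zx, hzx, hzxx⟩ := mem_vars_subst.1 hx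
    obtain ⟨zy, hzy, hzyy⟩ := mem_vars_subst.1 hy
    obtain ⟨L, hL, hzxL, hzyL⟩ := hG.exists_mem_vars_pair hzx hzy
    exact ⟨L.subst σ, List.mem_map_of_mem hL, Lit.mem_vars_subst.2 ⟨zx, hzxL, hzxx⟩,
      Lit.mem_vars_subst.2 ⟨zy, hzyL, hzyy⟩⟩

end Clause

theorem Lit.isGuardOf.subst {L : Lit} {C D : Clause} {σ : Subst} (hL : L.isGuardOf C)
    (hD : ∀ M, M ∈ D ↔ M ∈ C.subst σ) (hσ : ∀ z ∈ Clause.vars C, (σ z).flatArg) :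
    (L.subst σ).isGuardOf D := by
  obtain ⟨hLC, hneg, hflat, hvars⟩ := hL
  refine ⟨(hD _).2 (List.mem_map_of_mem hLC), hneg, hflat.subst (hvars ▸ hσ), ?_⟩
  ext x
  rw [Clause.vars_congr hD, Clause.mem_vars_subst, Lit.mem_vars_subst, hvars]

/-- Lemma D.2:  A condensation of a guarded clause is a guarded clause,
and a condensation of a loosely guarded clause is a loosely guarded clause. -/
theorem condensation_preserves_guardedness (C D : Clause) (hcond : IsCondensation D C) :
    (Clause.guarded C → Clause.guarded D) ∧
    (Clause.looselyGuarded C → Clause.looselyGuarded D) := by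
  obtain ⟨hsub, -, σ, hσ⟩ := hcond
  have hDC : ∀ L ∈ D, L ∈ C := fun L hL =>
    Multiset.mem_coe.1 (Multiset.subset_of_le hsub (Multiset.mem_coe.2 hL))
  have hflat : Clause.simple C → Clause.covering C → ∀ x ∈ Clause.vars C, (σ x).flatArg :=
    fun hsimp hcov => Clause.flatArg_subst_of_subst_mem hsimp hcov
      fun L hL => hDC _ ((hσ _).2 (List.mem_map_of_mem hL))
  constructor
  · rintro ⟨hsimp, hcov, hground | ⟨L, hL⟩⟩
    · exact ⟨hsimp.mono hDC, hcov.mono hDC, .inl (hground.mono hDC)⟩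
    · exact ⟨hsimp.mono hDC, hcov.mono hDC, .inr ⟨_, hL.subst hσ (hflat hsimp hcov)⟩⟩
  · rintro ⟨hsimp, hcov, hground | ⟨G, hG⟩⟩
    · exact ⟨hsimp.mono hDC, hcov.mono hDC, .inl (hground.mono hDC)⟩
    · exact ⟨hsimp.mono hDC, hcov.mono hDC, .inr ⟨_, hG.subst hσ (hflat hsimp hcov)⟩⟩

end QGF
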